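/- arXiv:0901.3361 — 2 statements merged into one kernel-verified Lean document; each statement's English description precedes it below -/
import Mathlib

section
/- Let e₁ and e₂ be two distinct primitive integral future-pointing null vectors in V. Then the horoballs U_{e₁} and U_{e₂} are disjoint: there is no x ∈ C⁺ with B(x,e₁) ≤ (1/2)·√(B(x,x)) and B(x,e₂) ≤ (1/2)·√(B(x,x)). -/
/-- The Minkowski bilinear form of signature `(1,n)` on `ℝ^{n+1}`:
`B x y = x₀ y₀ - ∑_{i=1}^n xᵢ yᵢ`. -/
def B (n : ℕ) (x y : Fin (n + 1) → ℝ) : ℝ :=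
  x 0 * y 0 - ∑ i : Fin n, x i.succ * y i.succ

/-- The integral vector `z ∈ ℤ^{n+1}` viewed inside `V = ℝ^{n+1}`. -/
def toReal (n : ℕ) (z : Fin (n + 1) → ℤ) : Fin (n + 1) → ℝ := fun i => (z i : ℝ)

/-!
Write `c = B(e₁,e₂)`. Two future null vectors have `c ≥ 0`, with equality only when they are
proportional; for distinct primitive integral ones `c` is therefore a positive integer, so `c ≥ 1`.
On the other hand, projecting `x` onto the orthogonal complement of `span(e₁,e₂)`, which is
spacelike, gives the reverse Cauchy–Schwarz inequality `c · B(x,x) ≤ 2 B(x,e₁) B(x,e₂)`.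
For `x` in both horoballs the right side is at most `B(x,x)/2`, contradicting `c ≥ 1`.
-/

open Finset

section Minkowski

variable {n : ℕ}

theorem B_comm (x y : Fin (n + 1) → ℝ) : B n x y = B n y x := by
  simp only [B, mul_comm]

theorem B_sub_left (x y z : Fin (n + 1) → ℝ) : B n (x - y) z = B n x z - B n y z := by
  simp only [B, Pi.sub_apply, sub_mul, sum_sub_distrib]
  ring

theorem B_smul_left (a : ℝ) (x z : Fin (n + 1) → ℝ) : B n (a • x) z = a * B n x z := by
  simp only [B, Pi.smul_apply, smul_eq_mul, mul_assoc, ← mul_sum]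
  ring

theorem B_sub_right (x y z : Fin (n + 1) → ℝ) : B n z (x - y) = B n z x - B n z y := by
  rw [B_comm, B_sub_left, B_comm x, B_comm y]

theorem B_smul_right (a : ℝ) (x z : Fin (n + 1) → ℝ) : B n z (a • x) = a * B n z x := by
  rw [B_comm, B_smul_left, B_comm]

/-- Cauchy–Schwarz for the spatial part `x 0 * y 0 - B n x y = ∑ xᵢ yᵢ` of the form. -/
theorem sq_sub_B_le (x y : Fin (n + 1) → ℝ) :
    (x 0 * y 0 - B n x y) ^ 2 ≤ (x 0 ^ 2 - B n x x) * (y 0 ^ 2 - B n y y) := by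
  simpa only [B, sub_sub_cancel, sq] using
    sum_mul_sq_le_sq_mul_sq univ (fun i : Fin n => x i.succ) (fun i => y i.succ)

theorem B_self_le_sq (x : Fin (n + 1) → ℝ) : B n x x ≤ x 0 ^ 2 := by
  simp only [B, sq, sub_le_self_iff]
  exact sum_nonneg fun i _ => mul_self_nonneg _

theorem eq_zero_of_B_self_eq_zero {y : Fin (n + 1) → ℝ} (hyy : B n y y = 0) (hy0 : y 0 = 0) :
    y = 0 := by
  have hsum : ∑ i : Fin n, y i.succ * y i.succ = 0 := by simpa [B, hy0] using hyy
  rw [sum_eq_zero_iff_of_nonneg fun i _ => mul_self_nonneg _] at hsum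
  funext j
  induction j using Fin.cases with
  | zero => exact hy0
  | succ i => exact mul_self_eq_zero.mp (hsum i (mem_univ i))

theorem B_nonneg_of_causal {x y : Fin (n + 1) → ℝ} (hx : 0 ≤ B n x x) (hy : 0 ≤ B n y y)
    (hx0 : 0 ≤ x 0) (hy0 : 0 ≤ y 0) : 0 ≤ B n x y := by
  have hsq : (x 0 * y 0 - B n x y) ^ 2 ≤ (x 0 * y 0) ^ 2 :=
    calc _ ≤ (x 0 ^ 2 - B n x x) * (y 0 ^ 2 - B n y y) := sq_sub_B_le x y
      _ ≤ x 0 ^ 2 * y 0 ^ 2 := by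
        gcongr
        · exact sub_nonneg.mpr (B_self_le_sq y)
        · linarith
        · linarith
      _ = (x 0 * y 0) ^ 2 := by ring
  linarith [(abs_le_of_sq_le_sq' hsq (mul_nonneg hx0 hy0)).2]

theorem B_self_nonpos_of_orthogonal_null {e y : Fin (n + 1) → ℝ} (he : B n e e = 0)
    (he0 : e 0 ≠ 0) (hye : B n y e = 0) : B n y y ≤ 0 := by
  have hcs := sq_sub_B_le y e
  rw [he, hye, sub_zero, sub_zero] at hcs
  have : 0 < e 0 ^ 2 := by positivity
  nlinarith

theorem smul_eq_smul_of_null_of_B_eq_zero {e₁ e₂ : Fin (n + 1) → ℝ} (h₁ : B n e₁ e₁ = 0)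
    (h₂ : B n e₂ e₂ = 0) (h₁₂ : B n e₁ e₂ = 0) : e₂ 0 • e₁ = e₁ 0 • e₂ := by
  set y := e₂ 0 • e₁ - e₁ 0 • e₂
  have hyy : B n y y = 0 := by
    simp only [y, B_sub_left, B_sub_right, B_smul_left, B_smul_right, h₁, h₂, h₁₂,
      B_comm e₂ e₁]
    ring
  have hy0 : y 0 = 0 := by simp only [y, Pi.sub_apply, Pi.smul_apply, smul_eq_mul]; ring
  exact sub_eq_zero.mp (eq_zero_of_B_self_eq_zero hyy hy0)

/-- The vector `y = c • x - B(x,e₂) • e₁ - B(x,e₁) • e₂` is orthogonal to `e₁` and `e₂`, hence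
`B(y,y) = c (c B(x,x) - 2 B(x,e₁) B(x,e₂))` is nonpositive. -/
theorem B_mul_B_self_le {e₁ e₂ : Fin (n + 1) → ℝ} (h₁ : B n e₁ e₁ = 0) (h₂ : B n e₂ e₂ = 0)
    (he₁0 : e₁ 0 ≠ 0) (hc : 0 < B n e₁ e₂) (x : Fin (n + 1) → ℝ) :
    B n e₁ e₂ * B n x x ≤ 2 * B n x e₁ * B n x e₂ := by
  set c := B n e₁ e₂
  set y := c • x - B n x e₂ • e₁ - B n x e₁ • e₂
  have hc' : B n e₂ e₁ = c := B_comm e₂ e₁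
  have hy₁ : B n y e₁ = 0 := by
    simp only [y, B_sub_left, B_smul_left, h₁, hc']
    ring
  have hyy : B n y y = c * (c * B n x x - 2 * B n x e₁ * B n x e₂) := by
    simp only [y, B_sub_left, B_sub_right, B_smul_left, B_smul_right, h₁, h₂, hc',
      B_comm e₁ x, B_comm e₂ x]
    ring
  have := B_self_nonpos_of_orthogonal_null h₁ he₁0 hy₁
  rw [hyy] at this
  nlinarith

end Minkowski

theorem eq_of_smul_eq_smul_of_gcd_eq_one {ι : Type*} [Fintype ι] {z₁ z₂ : ι → ℤ} {a b : ℤ}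
    (h₁ : univ.gcd z₁ = 1) (h₂ : univ.gcd z₂ = 1) (ha : 0 < a) (hb : 0 ≤ b)
    (h : a • z₁ = b • z₂) : z₁ = z₂ := by
  have hab : a = b := by
    have hgcd := congrArg (fun z => univ.gcd z) h
    simpa only [Pi.smul_def, smul_eq_mul, Finset.gcd_mul_left, h₁, h₂,
      Int.normalize_of_nonneg ha.le, Int.normalize_of_nonneg hb, mul_one] using hgcd
  subst hab
  exact smul_right_injective _ ha.ne' h

section Integral

variable {n : ℕ}

theorem toReal_injective : Function.Injective (toReal n) :=
  fun _ _ h => funext fun i => Int.cast_injective (congrFun h i)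

theorem toReal_smul (a : ℤ) (z : Fin (n + 1) → ℤ) : toReal n (a • z) = (a : ℝ) • toReal n z := by
  funext i
  simp [toReal]

theorem B_toReal (z₁ z₂ : Fin (n + 1) → ℤ) :
    B n (toReal n z₁) (toReal n z₂) =
      ((z₁ 0 * z₂ 0 - ∑ i : Fin n, z₁ i.succ * z₂ i.succ : ℤ) : ℝ) := by
  simp [B, toReal]

theorem one_le_B_toReal {z₁ z₂ : Fin (n + 1) → ℤ}
    (hprim₁ : univ.gcd z₁ = 1) (hprim₂ : univ.gcd z₂ = 1)
    (hnull₁ : B n (toReal n z₁) (toReal n z₁) = 0)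
    (hnull₂ : B n (toReal n z₂) (toReal n z₂) = 0)
    (hfut₁ : 0 < z₁ 0) (hfut₂ : 0 < z₂ 0) (hne : z₁ ≠ z₂) :
    1 ≤ B n (toReal n z₁) (toReal n z₂) := by
  have hnonneg : 0 ≤ B n (toReal n z₁) (toReal n z₂) :=
    B_nonneg_of_causal hnull₁.ge hnull₂.ge (Int.cast_nonneg_iff.mpr hfut₁.le)
      (Int.cast_nonneg_iff.mpr hfut₂.le)
  have hne_zero : B n (toReal n z₁) (toReal n z₂) ≠ 0 := by
    intro h₀
    have hreal := smul_eq_smul_of_null_of_B_eq_zero hnull₁ hnull₂ h₀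
    rw [show toReal n z₁ 0 = (z₁ 0 : ℝ) from rfl, show toReal n z₂ 0 = (z₂ 0 : ℝ) from rfl,
      ← toReal_smul, ← toReal_smul] at hreal
    exact hne (eq_of_smul_eq_smul_of_gcd_eq_one hprim₁ hprim₂ hfut₂ hfut₁.le
      (toReal_injective hreal))
  rw [B_toReal] at hnonneg hne_zero ⊢
  exact_mod_cast (lt_of_le_of_ne hnonneg (Ne.symm hne_zero) : (0 : ℝ) < _)

end Integral

theorem horoballs_disjoint_general (n : ℕ) (z₁ z₂ : Fin (n + 1) → ℤ)
    (hprim₁ : Finset.univ.gcd z₁ = 1) (hprim₂ : Finset.univ.gcd z₂ = 1)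
    (hnull₁ : B n (toReal n z₁) (toReal n z₁) = 0)
    (hnull₂ : B n (toReal n z₂) (toReal n z₂) = 0)
    (hfut₁ : 0 < z₁ 0) (hfut₂ : 0 < z₂ 0)
    (hne : z₁ ≠ z₂) :
    ¬ ∃ x : Fin (n + 1) → ℝ, (0 < B n x x ∧ 0 < x 0) ∧
      B n x (toReal n z₁) ≤ (1 / 2) * Real.sqrt (B n x x) ∧
      B n x (toReal n z₂) ≤ (1 / 2) * Real.sqrt (B n x x) := by
  rintro ⟨x, ⟨hq, hx0⟩, h₁, h₂⟩
  have he₁0 : 0 < toReal n z₁ 0 := Int.cast_pos.mpr hfut₁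
  have he₂0 : 0 < toReal n z₂ 0 := Int.cast_pos.mpr hfut₂
  have hc := one_le_B_toReal hprim₁ hprim₂ hnull₁ hnull₂ hfut₁ hfut₂ hne
  have hp₂ : 0 ≤ B n x (toReal n z₂) := B_nonneg_of_causal hq.le hnull₂.ge hx0.le he₂0.le
  have hprod : B n x (toReal n z₁) * B n x (toReal n z₂) ≤ B n x x / 4 :=
    calc _ ≤ (1 / 2 * √(B n x x)) * (1 / 2 * √(B n x x)) :=
          mul_le_mul h₁ h₂ hp₂ (by positivity)
      _ = B n x x / 4 := by rw [mul_mul_mul_comm, Real.mul_self_sqrt hq.le]; ring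
  have hkey := B_mul_B_self_le hnull₁ hnull₂ he₁0.ne' (by linarith) x
  nlinarith

/-- The horoballs `U_{e₁}` and `U_{e₂}` attached to two distinct primitive integral
future-pointing null vectors are disjoint: no point `x` of the open positive cone
satisfies `B(x,eⱼ) ≤ (1/2)√(B(x,x))` for both `j = 1, 2`. -/
theorem horoballs_disjoint (n : ℕ) (hn : 1 ≤ n) (z₁ z₂ : Fin (n + 1) → ℤ)
    (hprim₁ : Finset.univ.gcd z₁ = 1) (hprim₂ : Finset.univ.gcd z₂ = 1)
    (hnull₁ : B n (toReal n z₁) (toReal n z₁) = 0)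
    (hnull₂ : B n (toReal n z₂) (toReal n z₂) = 0)
    (hfut₁ : 0 < z₁ 0) (hfut₂ : 0 < z₂ 0)
    (hne : z₁ ≠ z₂) :
    ¬ ∃ x : Fin (n + 1) → ℝ, (0 < B n x x ∧ 0 < x 0) ∧
      B n x (toReal n z₁) ≤ (1 / 2) * Real.sqrt (B n x x) ∧
      B n x (toReal n z₂) ≤ (1 / 2) * Real.sqrt (B n x x) :=
  horoballs_disjoint_general n z₁ z₂ hprim₁ hprim₂ hnull₁ hnull₂ hfut₁ hfut₂ hne
end

section
/- (Local finiteness of the Dirichlet decomposition.) Let G be a subgroup of O⁺(ℤ). Let 𝒫 be a collection of rational polyhedral cones in V, each contained in the closed positive cone {x ∈ V : B(x,x) ≥ 0 and x₀ ≥ 0}, such that (i) g(P) ∈ 𝒫 for every g ∈ G and P ∈ 𝒫, (ii) there is a finite subcollection 𝒫₀ ⊆ 𝒫 such that every P ∈ 𝒫 equals g(P₀) for some g ∈ G and P₀ ∈ 𝒫₀, and (iii) the union C = ⋃_{P ∈ 𝒫} P is a convex set. Let y ∈ ℚ^{n+1} lie in the topological interior of some member of 𝒫 with trivial stabilizer in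 G, and let D = {x ∈ closure(C) : B(x,y) ≤ B(x,g(y)) for all g ∈ G}. Then the collection of cones {g(D) : g ∈ G} is locally finite in the open positive cone: for every compact subset K ⊆ C⁺, the set of cones {g(D) : g ∈ G, g(D) ∩ K ≠ ∅} is finite. -/
/-- The integral lattice `ℤ^{n+1} ⊆ ℝ^{n+1}`. -/
def intLattice (n : ℕ) : Set (Fin (n + 1) → ℝ) := {x | ∀ i, ∃ m : ℤ, x i = (m : ℝ)}

/-- The open positive cone `C⁺ = {x : B(x,x) > 0, x₀ > 0}`. -/
def posCone (n : ℕ) : Set (Fin (n + 1) → ℝ) := {x | 0 < B n x x ∧ 0 < x 0}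

/-- The closed positive cone `{x : B(x,x) ≥ 0, x₀ ≥ 0}`. -/
def closedPosCone (n : ℕ) : Set (Fin (n + 1) → ℝ) := {x | 0 ≤ B n x x ∧ 0 ≤ x 0}

/-- Membership in `O⁺(ℤ)`: a linear automorphism of `V` preserving the Minkowski form,
mapping the lattice `ℤ^{n+1}` onto itself and the open positive cone onto itself. -/
def InOplusZ (n : ℕ) (g : (Fin (n + 1) → ℝ) ≃ₗ[ℝ] (Fin (n + 1) → ℝ)) : Prop :=
  (∀ x y, B n (g x) (g y) = B n x y) ∧
  g '' intLattice n = intLattice n ∧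
  g '' posCone n = posCone n

/-- A rational polyhedral cone: the set of nonnegative real linear combinations of a
finite set of integral vectors. -/
def IsRatPolyCone (n : ℕ) (P : Set (Fin (n + 1) → ℝ)) : Prop :=
  ∃ s : Finset (Fin (n + 1) → ℤ),
    P = {x | ∃ c : (Fin (n + 1) → ℤ) → ℝ, (∀ v, 0 ≤ c v) ∧
      x = ∑ v ∈ s, c v • toReal n v}

/-! If `g(D)` meets `K` at `g x` with `x ∈ D`, then testing `x ∈ D` against `g⁻¹ y` gives
`B(g x, g y) = B(x, y) ≤ B(x, g⁻¹ y) = B(g x, y)`, which is bounded above on the compact set `K`.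
By the reverse Cauchy–Schwarz inequality, a compact `K ⊆ C⁺` admits `c > 0` with
`c z₀ ≤ B(x, z)` for all `x ∈ K` and `z` in the closed cone, so the orbit points `g y` in question
satisfy `|(g y)ᵢ| ≤ (g y)₀ ≤ M / c`. They lie in the lattice `(1/N) ℤ^{n+1}`, where `N` is a common
denominator of `y`, so there are finitely many of them, and as `y` has trivial stabilizer, finitely
many `g`. -/

lemma abs_apply_le_apply_zero_of_mem_closedPosCone {n : ℕ} {z : Fin (n + 1) → ℝ}
    (hz : z ∈ closedPosCone n) (i : Fin (n + 1)) : |z i| ≤ z 0 := by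
  obtain ⟨hB, h0⟩ := hz
  induction i using Fin.cases with
  | zero => exact (abs_of_nonneg h0).le
  | succ j =>
    have hj : z j.succ * z j.succ ≤ ∑ i : Fin n, z i.succ * z i.succ :=
      Finset.single_le_sum (f := fun i : Fin n => z i.succ * z i.succ)
        (fun i _ => mul_self_nonneg _) (Finset.mem_univ j)
    unfold B at hB
    exact abs_le_of_sq_le_sq (by rw [sq, sq]; linarith) h0

noncomputable def lightConeGap (n : ℕ) (x : Fin (n + 1) → ℝ) : ℝ :=
  x 0 - √(∑ i : Fin n, x i.succ ^ 2)

lemma continuous_lightConeGap (n : ℕ) : Continuous (lightConeGap n) := by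
  unfold lightConeGap; fun_prop

lemma lightConeGap_pos {n : ℕ} {x : Fin (n + 1) → ℝ} (hx : x ∈ posCone n) :
    0 < lightConeGap n x := by
  obtain ⟨hB, h0⟩ := hx
  unfold B at hB
  have hsq : ∑ i : Fin n, x i.succ ^ 2 = ∑ i : Fin n, x i.succ * x i.succ :=
    Finset.sum_congr rfl fun i _ => sq _
  rw [lightConeGap, sub_pos, Real.sqrt_lt' h0, hsq]
  linarith

lemma lightConeGap_mul_le_B (n : ℕ) (x : Fin (n + 1) → ℝ) {z : Fin (n + 1) → ℝ}
    (hz : z ∈ closedPosCone n) : lightConeGap n x * z 0 ≤ B n x z := by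
  obtain ⟨hzB, hz0⟩ := hz
  unfold B at hzB ⊢
  set S := ∑ i : Fin n, x i.succ ^ 2
  have hS : 0 ≤ S := Finset.sum_nonneg fun i _ => sq_nonneg _
  have hzS : ∑ i : Fin n, z i.succ ^ 2 ≤ z 0 ^ 2 := by
    simp only [sq]; linarith
  have hCS : (∑ i : Fin n, x i.succ * z i.succ) ^ 2 ≤ S * z 0 ^ 2 :=
    (Finset.sum_mul_sq_le_sq_mul_sq _ _ _).trans (mul_le_mul_of_nonneg_left hzS hS)
  have hsum : ∑ i : Fin n, x i.succ * z i.succ ≤ √S * z 0 := by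
    rw [← Real.sqrt_sq hz0, ← Real.sqrt_mul hS]
    exact Real.le_sqrt_of_sq_le hCS
  rw [lightConeGap]
  linarith

lemma exists_pos_mul_le_B_of_isCompact {n : ℕ} {K : Set (Fin (n + 1) → ℝ)}
    (hK : K ⊆ posCone n) (hKc : IsCompact K) :
    ∃ c > 0, ∀ x ∈ K, ∀ z ∈ closedPosCone n, c * z 0 ≤ B n x z := by
  obtain ⟨c, hc, hcK⟩ := hKc.exists_forall_le' (continuous_lightConeGap n).continuousOn
    fun x hx => lightConeGap_pos (hK hx)
  exact ⟨c, hc, fun x hx z hz => (mul_le_mul_of_nonneg_right (hcK x hx) hz.2).trans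
    (lightConeGap_mul_le_B n x hz)⟩

lemma interior_closedPosCone_subset_posCone (n : ℕ) : interior (closedPosCone n) ⊆ posCone n := by
  intro x hx
  obtain ⟨ε, hε, hball⟩ := Metric.isOpen_iff.mp isOpen_interior x hx
  set x' := x - (ε / 2) • (Pi.single 0 1 : Fin (n + 1) → ℝ)
  have hx' : x' ∈ closedPosCone n := by
    refine interior_subset (hball ?_)
    rw [Metric.mem_ball, dist_eq_norm,
      show x' - x = -((ε / 2) • Pi.single 0 1) from sub_sub_cancel_left _ _, norm_neg, norm_smul,
      Pi.norm_single, norm_one, Real.norm_of_nonneg (by positivity)]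
    linarith
  have h0 : x' 0 = x 0 - ε / 2 := by simp [x']
  have hsucc : ∀ i : Fin n, x' i.succ = x i.succ := fun i => by simp [x']
  obtain ⟨hB, hx'0⟩ := hx'
  simp only [B, h0, hsucc] at hB hx'0
  refine ⟨?_, by linarith⟩
  unfold B
  nlinarith

lemma finite_intLattice_sep_abs_le (n : ℕ) (R : ℝ) :
    {z ∈ intLattice n | ∀ i, |z i| ≤ R}.Finite := by
  refine ((Set.Finite.pi fun _ => Set.finite_Icc (-⌈R⌉) ⌈R⌉).image
    fun (m : Fin (n + 1) → ℤ) i => (m i : ℝ)).subset ?_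
  rintro z ⟨hz, hzR⟩
  choose m hm using hz
  refine ⟨m, fun i _ => ?_, funext fun i => (hm i).symm⟩
  obtain ⟨hlo, hhi⟩ := abs_le.mp (hm i ▸ hzR i)
  have hR := Int.le_ceil R
  constructor
  · exact_mod_cast (by linarith : -(⌈R⌉ : ℝ) ≤ m i)
  · exact_mod_cast hhi.trans hR

lemma exists_nat_smul_mem_intLattice (n : ℕ) (y : Fin (n + 1) → ℚ) :
    ∃ N : ℕ, 0 < N ∧ (N : ℝ) • (fun i => (y i : ℝ)) ∈ intLattice n := by
  refine ⟨∏ j, (y j).den, Finset.prod_pos fun j _ => (y j).pos, fun i => ?_⟩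
  obtain ⟨k, hk⟩ := Finset.dvd_prod_of_mem (fun j => (y j).den) (Finset.mem_univ i)
  refine ⟨k * (y i).num, ?_⟩
  have hQ : ((∏ j, (y j).den : ℕ) : ℚ) * y i = k * (y i).num := by
    rw [hk, Nat.cast_mul, mul_right_comm, Rat.den_mul_eq_num, mul_comm]
  simpa using congrArg (fun q : ℚ => (q : ℝ)) hQ

namespace InOplusZ

variable {n : ℕ} {g : (Fin (n + 1) → ℝ) ≃ₗ[ℝ] (Fin (n + 1) → ℝ)}

lemma B_symm_right (hg : InOplusZ n g) (x y : Fin (n + 1) → ℝ) :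
    B n x (g.symm y) = B n (g x) y := by
  rw [← hg.1, g.apply_symm_apply]

lemma mem_posCone (hg : InOplusZ n g) {x : Fin (n + 1) → ℝ} (hx : x ∈ posCone n) :
    g x ∈ posCone n :=
  hg.2.2 ▸ Set.mem_image_of_mem g hx

lemma mem_intLattice (hg : InOplusZ n g) {x : Fin (n + 1) → ℝ} (hx : x ∈ intLattice n) :
    g x ∈ intLattice n :=
  hg.2.1 ▸ Set.mem_image_of_mem g hx

end InOplusZ

lemma finite_of_forall_abs_apply_le {n : ℕ}
    {G : Subgroup ((Fin (n + 1) → ℝ) ≃ₗ[ℝ] (Fin (n + 1) → ℝ))} (hG : ∀ g ∈ G, InOplusZ n g)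
    {y : Fin (n + 1) → ℝ} {N : ℕ} (hN : 0 < N) (hNy : (N : ℝ) • y ∈ intLattice n)
    (hstab : ∀ g ∈ G, g y = y → g = 1) {T : Set ((Fin (n + 1) → ℝ) ≃ₗ[ℝ] (Fin (n + 1) → ℝ))}
    (hTG : T ⊆ G) {R : ℝ} (hTR : ∀ g ∈ T, ∀ i, |g y i| ≤ R) : T.Finite := by
  have hNpos : (0 : ℝ) < N := Nat.cast_pos.mpr hN
  have hinj : Set.InjOn (fun g : (Fin (n + 1) → ℝ) ≃ₗ[ℝ] _ => (N : ℝ) • g y) T := by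
    intro g₁ hg₁ g₂ hg₂ h
    have h' : g₂⁻¹ * g₁ ∈ G := mul_mem (inv_mem (hTG hg₂)) (hTG hg₁)
    have hfix : (g₂⁻¹ * g₁) y = y := by
      simp only [LinearEquiv.mul_apply, LinearEquiv.coe_inv, smul_right_injective _ hNpos.ne' h,
        LinearEquiv.symm_apply_apply]
    exact (inv_mul_eq_one.mp (hstab _ h' hfix)).symm
  refine Set.Finite.of_finite_image ((finite_intLattice_sep_abs_le n (N * R)).subset ?_) hinj
  rintro _ ⟨g, hg, rfl⟩
  refine ⟨by simpa only [map_smul] using (hG g (hTG hg)).mem_intLattice hNy, fun i => ?_⟩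
  simpa [abs_mul] using mul_le_mul_of_nonneg_left (hTR g hg i) hNpos.le

theorem dirichlet_translates_locally_finite_general (n : ℕ)
    (G : Subgroup ((Fin (n + 1) → ℝ) ≃ₗ[ℝ] (Fin (n + 1) → ℝ)))
    (hG : ∀ g ∈ G, InOplusZ n g)
    (Pc : Set (Set (Fin (n + 1) → ℝ)))
    (hPcpos : ∀ P ∈ Pc, P ⊆ closedPosCone n)
    (y : Fin (n + 1) → ℚ)
    (hyint : ∃ P ∈ Pc, (fun i => (y i : ℝ)) ∈ interior P)
    (hystab : ∀ g ∈ G, (g : (Fin (n + 1) → ℝ) ≃ₗ[ℝ] _) (fun i => (y i : ℝ)) =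
      (fun i => (y i : ℝ)) → g = 1)
    (D : Set (Fin (n + 1) → ℝ))
    (hD : D = {x ∈ closure (⋃₀ Pc) | ∀ g ∈ G,
      B n x (fun i => (y i : ℝ)) ≤ B n x (g (fun i => (y i : ℝ)))})
    (K : Set (Fin (n + 1) → ℝ)) (hK : K ⊆ posCone n) (hKcpt : IsCompact K) :
    {S : Set (Fin (n + 1) → ℝ) | ∃ g ∈ G,
      S = (g : (Fin (n + 1) → ℝ) ≃ₗ[ℝ] _) '' D ∧ (S ∩ K).Nonempty}.Finite := by
  set yR : Fin (n + 1) → ℝ := fun i => (y i : ℝ)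
  have hyR : yR ∈ posCone n := by
    obtain ⟨P, hP, hyP⟩ := hyint
    exact interior_closedPosCone_subset_posCone n (interior_mono (hPcpos P hP) hyP)
  obtain ⟨N, hN, hNy⟩ := exists_nat_smul_mem_intLattice n y
  obtain ⟨M, hM⟩ := hKcpt.bddAbove_image (f := fun x => B n x yR)
    (by unfold B; fun_prop : Continuous _).continuousOn
  obtain ⟨c, hc, hcK⟩ := exists_pos_mul_le_B_of_isCompact hK hKcpt
  set T := {g ∈ G | ((g : (Fin (n + 1) → ℝ) ≃ₗ[ℝ] _) '' D ∩ K).Nonempty}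
  have hT : T.Finite := by
    refine finite_of_forall_abs_apply_le hG hN hNy hystab (fun g hg => hg.1) (R := M / c) ?_
    rintro g ⟨hgG, _, ⟨x, hxD, rfl⟩, hxK⟩ i
    have hg := hG g hgG
    obtain ⟨hgyB, hgy0⟩ := hg.mem_posCone hyR
    have hgy : g yR ∈ closedPosCone n := ⟨hgyB.le, hgy0.le⟩
    have hbound : c * g yR 0 ≤ M := calc
      c * g yR 0 ≤ B n (g x) (g yR) := hcK _ hxK _ hgy
      _ = B n x yR := hg.1 x yR
      _ ≤ B n x (g.symm yR) := (hD ▸ hxD).2 g⁻¹ (inv_mem hgG)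
      _ = B n (g x) yR := hg.B_symm_right x yR
      _ ≤ M := hM ⟨_, hxK, rfl⟩
    exact (abs_apply_le_apply_zero_of_mem_closedPosCone hgy i).trans
      ((le_div_iff₀' hc).mpr hbound)
  refine (hT.image fun g => (g : (Fin (n + 1) → ℝ) ≃ₗ[ℝ] _) '' D).subset ?_
  rintro S ⟨g, hg, rfl, hS⟩
  exact ⟨g, ⟨hg, hS⟩, rfl⟩

/-- Local finiteness of the Dirichlet decomposition: the `G`-translates of the Dirichlet
domain `D` form a locally finite collection in the open positive cone. -/
theorem dirichlet_translates_locally_finite (n : ℕ) (hn : 1 ≤ n)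
    (G : Subgroup ((Fin (n + 1) → ℝ) ≃ₗ[ℝ] (Fin (n + 1) → ℝ)))
    (hG : ∀ g ∈ G, InOplusZ n g)
    (Pc : Set (Set (Fin (n + 1) → ℝ)))
    (hPccone : ∀ P ∈ Pc, IsRatPolyCone n P)
    (hPcpos : ∀ P ∈ Pc, P ⊆ closedPosCone n)
    (hPcinv : ∀ g ∈ G, ∀ P ∈ Pc, (g : (Fin (n + 1) → ℝ) ≃ₗ[ℝ] _) '' P ∈ Pc)
    (hPcfin : ∃ P0 ⊆ Pc, P0.Finite ∧
      ∀ P ∈ Pc, ∃ g ∈ G, ∃ P₀ ∈ P0, P = (g : (Fin (n + 1) → ℝ) ≃ₗ[ℝ] _) '' P₀)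
    (hconv : Convex ℝ (⋃₀ Pc))
    (y : Fin (n + 1) → ℚ)
    (hyint : ∃ P ∈ Pc, (fun i => (y i : ℝ)) ∈ interior P)
    (hystab : ∀ g ∈ G, (g : (Fin (n + 1) → ℝ) ≃ₗ[ℝ] _) (fun i => (y i : ℝ)) =
      (fun i => (y i : ℝ)) → g = 1)
    (D : Set (Fin (n + 1) → ℝ))
    (hD : D = {x ∈ closure (⋃₀ Pc) | ∀ g ∈ G,
      B n x (fun i => (y i : ℝ)) ≤ B n x (g (fun i => (y i : ℝ)))})
    (K : Set (Fin (n + 1) → ℝ)) (hK : K ⊆ posCone n) (hKcpt : IsCompact K) :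
    {S : Set (Fin (n + 1) → ℝ) | ∃ g ∈ G,
      S = (g : (Fin (n + 1) → ℝ) ≃ₗ[ℝ] _) '' D ∧ (S ∩ K).Nonempty}.Finite :=
  dirichlet_translates_locally_finite_general n G hG Pc hPcpos y hyint hystab D hD K hK hKcpt
end
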